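/- arXiv:2110.06788 — 7 statements merged into one kernel-verified Lean document; each statement's English description precedes it below -/
import Mathlib

section
/- Let ω be a weight, let f be a monic polynomial of degree d ≥ 1 with simple zeros, none in the open unit disk 𝔻 and at least one on the unit circle 𝕋, and let p_n be the n-th optimal polynomial approximant to 1/f in H²_ω. Then there exists a constant C > 0 such that for all n ∈ ℕ, the Wiener norm of 1 − p_n f is at most C, i.e. ∑_k |coeff_k(1 − p_n f)| ≤ C. -/
open Polynomial Filter Topology MeasureTheory Metric Asymptotics

noncomputable section

/-- A weight: positive, monotone, ω₀ = 1, ω_n/ω_{n-⌊√n⌋} → 1, ∑ 1/ω_k = ∞. -/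
def IsWeight (ω : ℕ → ℝ) : Prop :=
  (∀ k, 0 < ω k) ∧ (Monotone ω ∨ Antitone ω) ∧ ω 0 = 1 ∧
    Filter.Tendsto (fun n => ω n / ω (n - Nat.sqrt n)) Filter.atTop (nhds 1) ∧
    ¬ Summable (fun k => 1 / ω k)

/-- Squared H²_ω norm of a polynomial. -/
def wNormSq (ω : ℕ → ℝ) (g : Polynomial ℂ) : ℝ :=
  ∑ k ∈ Finset.range (g.natDegree + 1), ω k * ‖g.coeff k‖ ^ 2

/-- `p` is the n-th optimal polynomial approximant to `1/f` in `H²_ω`. -/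
def IsOPA (ω : ℕ → ℝ) (f : Polynomial ℂ) (n : ℕ) (p : Polynomial ℂ) : Prop :=
  p.degree ≤ (n : ℕ) ∧ ∀ q : Polynomial ℂ, q.degree ≤ (n : ℕ) →
    wNormSq ω (1 - p * f) ≤ wNormSq ω (1 - q * f)

/-- Partial sums `S_N = ∑_{k=0}^N 1/ω_k`. -/
def S (ω : ℕ → ℝ) (N : ℕ) : ℝ := ∑ k ∈ Finset.range (N + 1), 1 / ω k

/-- Truncated reproducing kernel `k_N(z,b) = ∑_{k=0}^N b̄^k z^k / ω_k`. -/
def kN (ω : ℕ → ℝ) (N : ℕ) (z b : ℂ) : ℂ :=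
  ∑ k ∈ Finset.range (N + 1), (starRingEnd ℂ b) ^ k * z ^ k / (ω k : ℂ)

/-- Zero-counting probability measure of a polynomial: the average of Dirac
masses at its roots, counted with multiplicity. -/
def zeroMeasure (q : Polynomial ℂ) : Measure ℂ :=
  (q.natDegree : ENNReal)⁻¹ • (q.roots.map (fun z => Measure.dirac z)).sum

/-- Normalized arclength (uniform) measure on the unit circle. -/
def nuT : Measure ℂ :=
  (ENNReal.ofReal (2 * Real.pi))⁻¹ •
    Measure.map (fun θ : ℝ => Complex.exp (θ * Complex.I))
      (MeasureTheory.volume.restrict (Set.Ioc 0 (2 * Real.pi)))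



/-! For a zero `b` of `f`, the normalized truncated reproducing kernel
`e_b = k_n(·, b) / k_n(b, b)` satisfies `e_b(b) = 1` and `‖e_b‖² = 1 / k_n(b, b) ≤ 1 / S_n`,
since `|b| ≥ 1`. Gluing the `e_b` with the Lagrange basis of the (simple) zeros gives `R` of
degree `≤ n + d` with `R = 1` on the zeros, so `1 - R = q f` with `deg q ≤ n`, and optimality gives
`‖1 - p_n f‖² ≤ ‖R‖² = O(1 / S_n)`: multiplication by a fixed polynomial is bounded on `H²_ω`
because `ω_{k+1} / ω_k` is bounded, which condition (i) and monotonicity guarantee. Finally, by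
Cauchy–Schwarz the squared Wiener norm of `1 - p_n f` is at most `S_{n+d} ‖1 - p_n f‖²`, and
`S_{n+d} = O(S_n)` for the same reason. -/

variable {ω : ℕ → ℝ}

lemma exists_succ_ratio_bound (hpos : ∀ k, 0 < ω k) (hmono : Monotone ω ∨ Antitone ω)
    (hlim : Tendsto (fun n => ω n / ω (n - Nat.sqrt n)) atTop (𝓝 1)) :
    ∃ M, 0 ≤ M ∧ ∀ n, ω (n + 1) ≤ M * ω n ∧ ω n ≤ M * ω (n + 1) := by
  obtain ⟨A, hA⟩ := hlim.bddAbove_range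
  obtain ⟨B, hB⟩ := (hlim.inv₀ one_ne_zero).bddAbove_range
  set M := max (max A B) 1
  refine ⟨M, zero_le_one.trans (le_max_right _ _), fun n => ?_⟩
  -- `ω n` lies between `ω m` and `ω (n + 1)`, whose ratio is controlled by `hlim`
  set m := n + 1 - Nat.sqrt (n + 1)
  have hmn : m ≤ n := by have : 0 < Nat.sqrt (n + 1) := Nat.sqrt_pos.2 n.succ_pos; omega
  have hup : ω (n + 1) ≤ M * ω m := by
    have : ω (n + 1) / ω m ≤ A := hA ⟨n + 1, rfl⟩
    rw [div_le_iff₀ (hpos m)] at this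
    exact this.trans (by gcongr; exacts [(hpos m).le, le_max_of_le_left (le_max_left _ _)])
  have hlow : ω m ≤ M * ω (n + 1) := by
    have : (ω (n + 1) / ω m)⁻¹ ≤ B := hB ⟨n + 1, rfl⟩
    rw [inv_div, div_le_iff₀ (hpos _)] at this
    exact this.trans (by gcongr; exacts [(hpos _).le, le_max_of_le_left (le_max_right _ _)])
  have hself : ∀ k, ω k ≤ M * ω k := fun k =>
    le_mul_of_one_le_left (hpos k).le (le_max_right _ _)
  rcases hmono with hmono | hanti
  · exact ⟨hup.trans (by gcongr; exact hmono hmn), (hmono n.le_succ).trans (hself _)⟩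
  · exact ⟨(hanti n.le_succ).trans (hself _), (hanti hmn).trans hlow⟩

lemma S_pos (hpos : ∀ k, 0 < ω k) (n : ℕ) : 0 < S ω n :=
  Finset.sum_pos (fun k _ => one_div_pos.2 (hpos k)) ⟨0, by simp⟩

lemma S_mono (hpos : ∀ k, 0 < ω k) : Monotone (S ω) := fun _ _ hmn =>
  Finset.sum_le_sum_of_subset_of_nonneg (Finset.range_subset_range.2 (by omega))
    fun k _ _ => (one_div_pos.2 (hpos k)).le

lemma S_succ_le {M : ℝ} (hpos : ∀ k, 0 < ω k) (hM0 : 0 ≤ M) (hM : ∀ n, ω n ≤ M * ω (n + 1))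
    (n : ℕ) : S ω (n + 1) ≤ (1 + M) * S ω n := by
  have hlast : 1 / ω (n + 1) ≤ M * S ω n := calc
    1 / ω (n + 1) ≤ M * (1 / ω n) := by
      rw [mul_one_div, div_le_div_iff₀ (hpos _) (hpos n)]; linarith [hM n]
    _ ≤ M * S ω n := by
      gcongr
      exact Finset.single_le_sum (f := fun k => 1 / ω k)
        (fun k _ => (one_div_pos.2 (hpos k)).le) (Finset.self_mem_range_succ n)
  rw [S, Finset.sum_range_succ, ← S]
  linarith

lemma S_add_le {M : ℝ} (hpos : ∀ k, 0 < ω k) (hM0 : 0 ≤ M) (hM : ∀ n, ω n ≤ M * ω (n + 1))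
    (n d : ℕ) : S ω (n + d) ≤ (1 + M) ^ d * S ω n := by
  induction d with
  | zero => simp
  | succ d ih => calc
    S ω (n + d + 1) ≤ (1 + M) * S ω (n + d) := S_succ_le hpos hM0 hM _
    _ ≤ (1 + M) * ((1 + M) ^ d * S ω n) := by gcongr
    _ = (1 + M) ^ (d + 1) * S ω n := by ring

lemma wNormSq_eq_sum_range {g : ℂ[X]} {N : ℕ} (hN : g.natDegree < N) :
    wNormSq ω g = ∑ k ∈ Finset.range N, ω k * ‖g.coeff k‖ ^ 2 := by
  refine Finset.sum_subset (Finset.range_subset_range.2 hN) fun k _ hk => ?_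
  rw [coeff_eq_zero_of_natDegree_lt (by simp at hk; omega), norm_zero]
  ring

lemma wNormSq_nonneg (hpos : ∀ k, 0 < ω k) (g : ℂ[X]) : 0 ≤ wNormSq ω g :=
  Finset.sum_nonneg fun k _ => mul_nonneg (hpos k).le (sq_nonneg _)

lemma wNormSq_C_mul (c : ℂ) (g : ℂ[X]) : wNormSq ω (C c * g) = ‖c‖ ^ 2 * wNormSq ω g := by
  rw [wNormSq_eq_sum_range ((natDegree_C_mul_le c g).trans_lt g.natDegree.lt_succ_self),
    wNormSq, Finset.mul_sum]
  refine Finset.sum_congr rfl fun k _ => ?_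
  rw [coeff_C_mul, norm_mul, mul_pow]
  ring

lemma wNormSq_X_mul_le {M : ℝ} (hM : ∀ k, ω (k + 1) ≤ M * ω k) (g : ℂ[X]) :
    wNormSq ω (X * g) ≤ M * wNormSq ω g := by
  have hdeg : (X * g).natDegree < g.natDegree + 1 + 1 :=
    Nat.lt_succ_of_le (natDegree_mul_le.trans (by have := natDegree_X_le (R := ℂ); omega))
  rw [wNormSq_eq_sum_range hdeg, Finset.sum_range_succ', coeff_X_mul_zero, norm_zero,
    wNormSq, Finset.mul_sum]
  simp only [coeff_X_mul]
  refine (add_le_of_nonpos_right (by simp)).trans (Finset.sum_le_sum fun k _ => ?_)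
  rw [← mul_assoc]
  exact mul_le_mul_of_nonneg_right (hM k) (sq_nonneg _)

lemma wNormSq_X_pow_mul_le {M : ℝ} (hM0 : 0 ≤ M) (hM : ∀ k, ω (k + 1) ≤ M * ω k) (i : ℕ)
    (g : ℂ[X]) : wNormSq ω (X ^ i * g) ≤ M ^ i * wNormSq ω g := by
  induction i with
  | zero => simp
  | succ i ih => calc
    wNormSq ω (X ^ (i + 1) * g) = wNormSq ω (X * (X ^ i * g)) := by rw [pow_succ', mul_assoc]
    _ ≤ M * wNormSq ω (X ^ i * g) := wNormSq_X_mul_le hM _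
    _ ≤ M * (M ^ i * wNormSq ω g) := by gcongr
    _ = M ^ (i + 1) * wNormSq ω g := by ring

lemma wNormSq_sum_le (hpos : ∀ k, 0 < ω k) {ι : Type*} (t : Finset ι) (u : ι → ℂ[X]) :
    wNormSq ω (∑ x ∈ t, u x) ≤ t.card * ∑ x ∈ t, wNormSq ω (u x) := by
  set N := t.sup (fun x => (u x).natDegree) + 1
  have hN : ∀ x ∈ t, (u x).natDegree < N := fun x hx =>
    Nat.lt_succ_of_le (Finset.le_sup (f := fun x => (u x).natDegree) hx)
  have hsum : (∑ x ∈ t, u x).natDegree < N :=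
    Nat.lt_succ_of_le <| natDegree_sum_le_of_forall_le _ _ fun x hx => Nat.le_of_lt_succ (hN x hx)
  rw [wNormSq_eq_sum_range hsum, Finset.sum_congr rfl fun x hx => wNormSq_eq_sum_range (hN x hx),
    Finset.sum_comm, Finset.mul_sum]
  refine Finset.sum_le_sum fun k _ => ?_
  calc ω k * ‖(∑ x ∈ t, u x).coeff k‖ ^ 2
      ≤ ω k * (t.card * ∑ x ∈ t, ‖(u x).coeff k‖ ^ 2) := by
        gcongr
        · exact (hpos k).le
        rw [finsetSum_coeff]
        exact (pow_le_pow_left₀ (norm_nonneg _) (norm_sum_le _ _) 2).trans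
          sq_sum_le_card_mul_sum_sq
    _ = t.card * ∑ x ∈ t, ω k * ‖(u x).coeff k‖ ^ 2 := by
        rw [Finset.mul_sum, Finset.mul_sum, Finset.mul_sum]
        exact Finset.sum_congr rfl fun _ _ => by ring

lemma exists_wNormSq_mul_le {M : ℝ} (hpos : ∀ k, 0 < ω k) (hM0 : 0 ≤ M)
    (hM : ∀ k, ω (k + 1) ≤ M * ω k) (h : ℂ[X]) :
    ∃ K, 0 ≤ K ∧ ∀ g, wNormSq ω (h * g) ≤ K * wNormSq ω g := by
  set N := h.natDegree + 1
  refine ⟨N * ∑ i ∈ Finset.range N, ‖h.coeff i‖ ^ 2 * M ^ i, by positivity, fun g => ?_⟩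
  have hexpand : h * g = ∑ i ∈ Finset.range N, C (h.coeff i) * (X ^ i * g) := by
    conv_lhs => rw [h.as_sum_range' N h.natDegree.lt_succ_self]
    rw [Finset.sum_mul]
    exact Finset.sum_congr rfl fun i _ => by rw [← C_mul_X_pow_eq_monomial]; ring
  calc wNormSq ω (h * g)
      ≤ N * ∑ i ∈ Finset.range N, wNormSq ω (C (h.coeff i) * (X ^ i * g)) := by
        rw [hexpand]
        simpa only [Finset.card_range] using wNormSq_sum_le hpos (Finset.range N) _
    _ ≤ N * ∑ i ∈ Finset.range N, ‖h.coeff i‖ ^ 2 * (M ^ i * wNormSq ω g) := by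
        simp only [wNormSq_C_mul]
        gcongr
        exact wNormSq_X_pow_mul_le hM0 hM _ _
    _ = (N * ∑ i ∈ Finset.range N, ‖h.coeff i‖ ^ 2 * M ^ i) * wNormSq ω g := by
        rw [mul_assoc, Finset.sum_mul]
        congr 1
        exact Finset.sum_congr rfl fun _ _ => by ring

lemma sq_tsum_norm_coeff_le (hpos : ∀ k, 0 < ω k) (g : ℂ[X]) :
    (∑' k, ‖g.coeff k‖) ^ 2 ≤ S ω g.natDegree * wNormSq ω g := by
  rw [tsum_eq_sum (s := Finset.range (g.natDegree + 1)) fun k hk => by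
      rw [coeff_eq_zero_of_natDegree_lt (by simp at hk; omega), norm_zero],
    ← div_le_iff₀' (S_pos hpos _)]
  convert Finset.sq_sum_div_le_sum_sq_div (Finset.range (g.natDegree + 1))
    (fun k => ‖g.coeff k‖) (fun k _ => one_div_pos.2 (hpos k)) using 1
  · rfl
  exact Finset.sum_congr rfl fun k _ => by rw [div_div_eq_mul_div, div_one, mul_comm]

section Kernel

-- the polynomial `z ↦ kN ω n z b`
def kernelPoly (ω : ℕ → ℝ) (n : ℕ) (b : ℂ) : ℂ[X] :=
  ∑ k ∈ Finset.range (n + 1), C (starRingEnd ℂ b ^ k / ω k) * X ^ k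

def peakPoly (ω : ℕ → ℝ) (n : ℕ) (b : ℂ) : ℂ[X] :=
  C ((wNormSq ω (kernelPoly ω n b) : ℂ)⁻¹) * kernelPoly ω n b

variable {n : ℕ} {b : ℂ}

lemma coeff_kernelPoly (k : ℕ) :
    (kernelPoly ω n b).coeff k = if k < n + 1 then starRingEnd ℂ b ^ k / ω k else 0 := by
  simp [kernelPoly, finsetSum_coeff]

lemma natDegree_kernelPoly_le : (kernelPoly ω n b).natDegree ≤ n :=
  natDegree_sum_le_of_forall_le _ _ fun k hk =>
    (natDegree_C_mul_le _ _).trans <| (natDegree_X_pow_le k).trans <|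
      Nat.le_of_lt_succ (Finset.mem_range.1 hk)

lemma wNormSq_kernelPoly (hpos : ∀ k, 0 < ω k) :
    wNormSq ω (kernelPoly ω n b) = ∑ k ∈ Finset.range (n + 1), (‖b‖ ^ 2) ^ k / ω k := by
  rw [wNormSq_eq_sum_range (Nat.lt_succ_of_le natDegree_kernelPoly_le)]
  refine Finset.sum_congr rfl fun k hk => ?_
  rw [coeff_kernelPoly, if_pos (Finset.mem_range.1 hk), norm_div, norm_pow, Complex.norm_conj,
    Complex.norm_real, Real.norm_of_nonneg (hpos k).le]
  field_simp [(hpos k).ne']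
  ring

lemma eval_kernelPoly_self (hpos : ∀ k, 0 < ω k) :
    (kernelPoly ω n b).eval b = wNormSq ω (kernelPoly ω n b) := by
  rw [wNormSq_kernelPoly hpos, kernelPoly, eval_finsetSum]
  push_cast
  refine Finset.sum_congr rfl fun k _ => ?_
  rw [eval_mul, eval_C, eval_pow, eval_X, div_mul_eq_mul_div, ← mul_pow, Complex.conj_mul']

lemma wNormSq_kernelPoly_pos (hpos : ∀ k, 0 < ω k) : 0 < wNormSq ω (kernelPoly ω n b) := by
  rw [wNormSq_kernelPoly hpos]
  exact Finset.sum_pos' (fun k _ => div_nonneg (by positivity) (hpos k).le)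
    ⟨0, by simp, by simpa using hpos 0⟩

lemma S_le_wNormSq_kernelPoly (hpos : ∀ k, 0 < ω k) (hb : 1 ≤ ‖b‖) :
    S ω n ≤ wNormSq ω (kernelPoly ω n b) := by
  rw [wNormSq_kernelPoly hpos]
  exact Finset.sum_le_sum fun k _ =>
    div_le_div_of_nonneg_right (one_le_pow₀ (one_le_pow₀ hb)) (hpos k).le

lemma natDegree_peakPoly_le : (peakPoly ω n b).natDegree ≤ n :=
  (natDegree_C_mul_le _ _).trans natDegree_kernelPoly_le

lemma eval_peakPoly_self (hpos : ∀ k, 0 < ω k) : (peakPoly ω n b).eval b = 1 := by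
  rw [peakPoly, eval_mul, eval_C, eval_kernelPoly_self hpos]
  exact inv_mul_cancel₀ (Complex.ofReal_ne_zero.2 (wNormSq_kernelPoly_pos hpos).ne')

lemma wNormSq_peakPoly_mul_S_le (hpos : ∀ k, 0 < ω k) (hb : 1 ≤ ‖b‖) :
    wNormSq ω (peakPoly ω n b) * S ω n ≤ 1 := by
  have hK := wNormSq_kernelPoly_pos hpos (n := n) (b := b)
  rw [peakPoly, wNormSq_C_mul, norm_inv, Complex.norm_real, Real.norm_of_nonneg hK.le,
    show (wNormSq ω (kernelPoly ω n b))⁻¹ ^ 2 * wNormSq ω (kernelPoly ω n b) =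
      (wNormSq ω (kernelPoly ω n b))⁻¹ by field_simp, inv_mul_le_iff₀ hK, mul_one]
  exact S_le_wNormSq_kernelPoly hpos hb

end Kernel

lemma exists_interpolant_wNormSq_mul_S_le {M : ℝ} (hpos : ∀ k, 0 < ω k) (hM0 : 0 ≤ M)
    (hM : ∀ k, ω (k + 1) ≤ M * ω k) (s : Finset ℂ) (hs : ∀ b ∈ s, 1 ≤ ‖b‖) :
    ∃ K, ∀ n, ∃ R : ℂ[X], R.natDegree ≤ n + s.card ∧ (∀ b ∈ s, R.eval b = 1) ∧
      wNormSq ω R * S ω n ≤ K := by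
  choose K hK0 hK using fun b => exists_wNormSq_mul_le hpos hM0 hM (Lagrange.basis s id b)
  refine ⟨s.card * ∑ b ∈ s, K b, fun n =>
    ⟨∑ b ∈ s, Lagrange.basis s id b * peakPoly ω n b, ?_, fun c hc => ?_, ?_⟩⟩
  · refine natDegree_sum_le_of_forall_le _ _ fun b hb => natDegree_mul_le.trans ?_
    rw [Lagrange.natDegree_basis (Set.injOn_id _) hb]
    have := natDegree_peakPoly_le (ω := ω) (n := n) (b := b)
    omega
  · rw [eval_finsetSum, Finset.sum_eq_single_of_mem c hc fun b _ hbc => ?_]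
    · rw [eval_mul, eval_peakPoly_self hpos, mul_one]
      exact Lagrange.eval_basis_self (v := id) (Set.injOn_id _) hc
    · rw [eval_mul]
      exact mul_eq_zero_of_left (Lagrange.eval_basis_of_ne (v := id) hbc hc) _
  · have hS := S_pos hpos n
    calc wNormSq ω (∑ b ∈ s, Lagrange.basis s id b * peakPoly ω n b) * S ω n
        ≤ (s.card * ∑ b ∈ s, K b * wNormSq ω (peakPoly ω n b)) * S ω n := by
          gcongr
          refine (wNormSq_sum_le hpos s _).trans ?_
          gcongr with b
          exact hK b _
      _ = s.card * ∑ b ∈ s, K b * (wNormSq ω (peakPoly ω n b) * S ω n) := by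
          rw [mul_assoc, Finset.sum_mul]
          congr 1
          exact Finset.sum_congr rfl fun _ _ => by ring
      _ ≤ s.card * ∑ b ∈ s, K b * 1 := by
          gcongr with b hb
          · exact hK0 b
          · exact wNormSq_peakPoly_mul_S_le hpos (hs b hb)
      _ = s.card * ∑ b ∈ s, K b := by simp

lemma Polynomial.dvd_of_forall_roots_eval_eq_zero {k : Type*} [Field k] [IsAlgClosed k]
    {f g : k[X]} (hf : f ≠ 0) (hnodup : f.roots.Nodup) (h : ∀ b ∈ f.roots, g.eval b = 0) :
    f ∣ g := by
  rcases eq_or_ne g 0 with rfl | hg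
  · exact dvd_zero f
  exact (IsAlgClosed.splits f).dvd_of_roots_le_roots hf
    ((Multiset.le_iff_subset hnodup).2 fun b hb => (mem_roots hg).2 (h b hb))

namespace IsOPA

variable {f p : ℂ[X]} {n : ℕ}

lemma natDegree_le (hp : IsOPA ω f n p) : (1 - p * f).natDegree ≤ n + f.natDegree :=
  (natDegree_sub_le _ _).trans <| max_le (by simp) <|
    natDegree_mul_le.trans (Nat.add_le_add_right (natDegree_le_of_degree_le hp.1) _)

lemma wNormSq_le (hp : IsOPA ω f n p) (hf : f ≠ 0) (hnodup : f.roots.Nodup) {R : ℂ[X]}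
    (hRdeg : R.natDegree ≤ n + f.natDegree) (hR : ∀ b ∈ f.roots, R.eval b = 1) :
    wNormSq ω (1 - p * f) ≤ wNormSq ω R := by
  obtain ⟨q, hq⟩ : f ∣ 1 - R := dvd_of_forall_roots_eval_eq_zero hf hnodup fun b hb => by
    rw [eval_sub, eval_one, hR b hb, sub_self]
  have hqdeg : q.natDegree ≤ n := by
    rcases eq_or_ne q 0 with rfl | hq0
    · simp
    have h1R : (1 - R).natDegree ≤ n + f.natDegree :=
      (natDegree_sub_le _ _).trans (max_le (by simp) hRdeg)
    rw [hq, natDegree_mul hf hq0] at h1R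
    omega
  have := hp.2 q (degree_le_of_natDegree_le hqdeg)
  rwa [mul_comm q, ← hq, sub_sub_cancel] at this

end IsOPA

theorem wiener_norm_bound_general
    (ω : ℕ → ℝ) (hω : IsWeight ω) (f : Polynomial ℂ)
    (hmonic : f.Monic)
    (hsimple : f.roots.Nodup)
    (hnodisk : ∀ z ∈ f.roots, 1 ≤ ‖z‖)
    (p : ℕ → Polynomial ℂ) (hp : ∀ n, IsOPA ω f n (p n)) :
    ∃ C : ℝ, 0 < C ∧ ∀ n : ℕ,
      (∑' k : ℕ, ‖((1 : Polynomial ℂ) - p n * f).coeff k‖) ≤ C := by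
  obtain ⟨hpos, hmono, -, hlim, -⟩ := hω
  obtain ⟨M, hM0, hM⟩ := exists_succ_ratio_bound hpos hmono hlim
  obtain ⟨K, hK⟩ := exists_interpolant_wNormSq_mul_S_le hpos hM0 (fun k => (hM k).1)
    f.roots.toFinset fun b hb => hnodisk b (Multiset.mem_toFinset.1 hb)
  have hcard : f.roots.toFinset.card = f.natDegree := by
    rw [Multiset.toFinset_card_of_nodup hsimple, IsAlgClosed.card_roots_eq_natDegree]
  refine ⟨√((1 + M) ^ f.natDegree * K) + 1, by positivity, fun n => ?_⟩
  obtain ⟨R, hRdeg, hReval, hRnorm⟩ := hK n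
  have hopt : wNormSq ω (1 - p n * f) ≤ wNormSq ω R :=
    (hp n).wNormSq_le hmonic.ne_zero hsimple (hcard ▸ hRdeg)
      fun b hb => hReval b (Multiset.mem_toFinset.2 hb)
  have hS : S ω (1 - p n * f).natDegree ≤ (1 + M) ^ f.natDegree * S ω n :=
    (S_mono hpos (hp n).natDegree_le).trans
      (S_add_le hpos hM0 (fun k => (hM k).2) n f.natDegree)
  have hsq : (∑' k, ‖(1 - p n * f).coeff k‖) ^ 2 ≤ (1 + M) ^ f.natDegree * K := calc
    _ ≤ S ω (1 - p n * f).natDegree * wNormSq ω (1 - p n * f) := sq_tsum_norm_coeff_le hpos _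
    _ ≤ (1 + M) ^ f.natDegree * S ω n * wNormSq ω R :=
      mul_le_mul hS hopt (wNormSq_nonneg hpos _) (by have := S_pos hpos n; positivity)
    _ ≤ (1 + M) ^ f.natDegree * K := by
      rw [mul_assoc]
      exact mul_le_mul_of_nonneg_left (by rwa [mul_comm]) (by positivity)
  exact (le_abs_self _).trans <| (Real.abs_le_sqrt hsq).trans <| le_add_of_nonneg_right zero_le_one

/-- Uniform bound for the Wiener norm of `1 - p_n f`. -/
theorem wiener_norm_bound
    (ω : ℕ → ℝ) (hω : IsWeight ω) (f : Polynomial ℂ) (d : ℕ) (hd : 1 ≤ d)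
    (hmonic : f.Monic) (hdeg : f.natDegree = d)
    (hsimple : f.roots.Nodup)
    (hnodisk : ∀ z ∈ f.roots, 1 ≤ ‖z‖)
    (hcirc : ∃ z ∈ f.roots, ‖z‖ = 1)
    (p : ℕ → Polynomial ℂ) (hp : ∀ n, IsOPA ω f n (p n)) :
    ∃ C : ℝ, 0 < C ∧ ∀ n : ℕ,
      (∑' k : ℕ, ‖((1 : Polynomial ℂ) - p n * f).coeff k‖) ≤ C :=
  wiener_norm_bound_general ω hω f hmonic hsimple hnodisk p hp

end
end

section
/- Let ω be a weight and let z ∈ ℂ with |z| > 1. Define C(N,z) = (ω_N / z^{N+1}) · ∑_{k=0}^N z^k/ω_k, so that ∑_{k=0}^N z^k/ω_k = C(N,z)·z^{N+1}/ω_N. Then C(N,z) → 1/(z−1) as N → ∞. -/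
open Polynomial Filter Topology MeasureTheory Metric Asymptotics

noncomputable section

/-!
Write `C N` for `normalizedPartialSum a z N`. Splitting off the last term of the sum gives
`z * C (N + 1) = (a (N + 1) / a N) * C N + 1`. When `a (N + 1) / a N → 1` the limiting recursion
has the fixed point `1 / (z - 1)`, and since `‖z‖ > 1` the error `C N - 1 / (z - 1)` is eventually
contracted by a fixed factor `q < 1` at each step, up to a perturbation tending to `0`.
For a weight, `ω (n + 1) / ω n` is squeezed between `1` and `ω n / ω (n - ⌊√n⌋)` by monotonicity.
-/

theorem tendsto_zero_of_le_mul_add {u δ : ℕ → ℝ} {q : ℝ} (hu : ∀ n, 0 ≤ u n) (hq₀ : 0 ≤ q)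
    (hq : q < 1) (hδ : Tendsto δ atTop (𝓝 0))
    (h : ∀ᶠ n in atTop, u (n + 1) ≤ q * u n + δ n) :
    Tendsto u atTop (𝓝 0) := by
  refine Metric.tendsto_atTop.2 fun ε hε => ?_
  have hδsmall : ∀ᶠ n in atTop, δ n < (1 - q) * (ε / 2) :=
    hδ.eventually (eventually_lt_nhds (mul_pos (sub_pos.2 hq) (half_pos hε)))
  obtain ⟨n₀, hn₀⟩ := eventually_atTop.1 (h.and hδsmall)
  -- since `δ n < (1 - q) * (ε / 2)`, the map `x ↦ q * x + δ n` pulls everything towards `ε / 2`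
  have hcontract : ∀ k, u (n₀ + k) - ε / 2 ≤ q ^ k * (u n₀ - ε / 2) := by
    intro k
    induction k with
    | zero => simp
    | succ k ih =>
      obtain ⟨hstep, hsmall⟩ := hn₀ (n₀ + k) (Nat.le_add_right n₀ k)
      calc u (n₀ + (k + 1)) - ε / 2 ≤ q * (u (n₀ + k) - ε / 2) := by
            rw [← add_assoc]; linarith
        _ ≤ q * (q ^ k * (u n₀ - ε / 2)) := mul_le_mul_of_nonneg_left ih hq₀
        _ = q ^ (k + 1) * (u n₀ - ε / 2) := by ring
  have hgeom : Tendsto (fun k => q ^ k * (u n₀ - ε / 2)) atTop (𝓝 0) := by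
    simpa using (tendsto_pow_atTop_nhds_zero_of_lt_one hq₀ hq).mul_const (u n₀ - ε / 2)
  obtain ⟨K, hK⟩ := eventually_atTop.1 (hgeom.eventually (eventually_lt_nhds (half_pos hε)))
  refine ⟨n₀ + K, fun n hn => ?_⟩
  obtain ⟨k, rfl⟩ := Nat.exists_eq_add_of_le (le_trans (Nat.le_add_right n₀ K) hn)
  rw [Real.dist_0_eq_abs, abs_of_nonneg (hu _)]
  linarith [hcontract k, hK k (by omega)]

section NormalizedPartialSum

variable {𝕜 : Type*} [NormedField 𝕜]

def normalizedPartialSum (a : ℕ → 𝕜) (z : 𝕜) (N : ℕ) : 𝕜 :=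
  a N / z ^ (N + 1) * ∑ k ∈ Finset.range (N + 1), z ^ k / a k

theorem normalizedPartialSum_succ {a : ℕ → 𝕜} (ha : ∀ k, a k ≠ 0) {z : 𝕜} (hz : z ≠ 0) (N : ℕ) :
    normalizedPartialSum a z (N + 1) = (a (N + 1) / a N * normalizedPartialSum a z N + 1) / z := by
  unfold normalizedPartialSum
  rw [Finset.sum_range_succ (n := N + 1)]
  field_simp [ha N, ha (N + 1)]
  ring

theorem normalizedPartialSum_succ_sub {a : ℕ → 𝕜} (ha : ∀ k, a k ≠ 0) {z : 𝕜} (hz : z ≠ 0)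
    (hz₁ : z ≠ 1) (N : ℕ) :
    normalizedPartialSum a z (N + 1) - 1 / (z - 1) =
      (a (N + 1) / a N * (normalizedPartialSum a z N - 1 / (z - 1)) +
        (a (N + 1) / a N - 1) * (1 / (z - 1))) / z := by
  rw [normalizedPartialSum_succ ha hz]
  field_simp [sub_ne_zero.2 hz₁]
  ring

theorem tendsto_normalizedPartialSum {a : ℕ → 𝕜} (ha : ∀ k, a k ≠ 0)
    (hratio : Tendsto (fun n => a (n + 1) / a n) atTop (𝓝 1)) {z : 𝕜} (hz : 1 < ‖z‖) :
    Tendsto (normalizedPartialSum a z) atTop (𝓝 (1 / (z - 1))) := by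
  have hz₀ : z ≠ 0 := norm_pos_iff.1 (one_pos.trans hz)
  have hz₁ : z ≠ 1 := by
    rintro rfl
    simp at hz
  set L : 𝕜 := 1 / (z - 1)
  obtain ⟨q, hzq, hq⟩ := exists_between (inv_lt_one_of_one_lt₀ hz)
  have hq₀ : 0 ≤ q := (inv_nonneg.2 (norm_nonneg z)).trans hzq.le
  have hcontract : ∀ᶠ n in atTop, ‖a (n + 1) / a n‖ / ‖z‖ ≤ q :=
    (hratio.norm.div_const ‖z‖).eventually_le_const (by rwa [norm_one, one_div])
  have hδ : Tendsto (fun n => ‖a (n + 1) / a n - 1‖ * ‖L‖ / ‖z‖) atTop (𝓝 0) := by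
    simpa using ((hratio.sub_const 1).norm.mul_const ‖L‖).div_const ‖z‖
  have herror : Tendsto (fun n => ‖normalizedPartialSum a z n - L‖) atTop (𝓝 0) := by
    refine tendsto_zero_of_le_mul_add (fun n => norm_nonneg _) hq₀ hq hδ ?_
    filter_upwards [hcontract] with n hn
    set r := a (n + 1) / a n
    set e := normalizedPartialSum a z n - L
    rw [normalizedPartialSum_succ_sub ha hz₀ hz₁, norm_div]
    calc ‖r * e + (r - 1) * L‖ / ‖z‖ ≤ (‖r‖ * ‖e‖ + ‖r - 1‖ * ‖L‖) / ‖z‖ := by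
          gcongr
          exact (norm_add_le _ _).trans_eq (by rw [norm_mul, norm_mul])
      _ = ‖r‖ / ‖z‖ * ‖e‖ + ‖r - 1‖ * ‖L‖ / ‖z‖ := by ring
      _ ≤ q * ‖e‖ + ‖r - 1‖ * ‖L‖ / ‖z‖ := by gcongr
  exact tendsto_sub_nhds_zero_iff.1 (tendsto_zero_iff_norm_tendsto_zero.2 herror)

end NormalizedPartialSum

theorem tendsto_succ_div_of_tendsto_div_sub_sqrt {ω : ℕ → ℝ} (hpos : ∀ k, 0 < ω k)
    (hmono : Monotone ω ∨ Antitone ω)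
    (hlim : Tendsto (fun n => ω n / ω (n - Nat.sqrt n)) atTop (𝓝 1)) :
    Tendsto (fun n => ω (n + 1) / ω n) atTop (𝓝 1) := by
  have hlim' := hlim.comp (tendsto_add_atTop_nat 1)
  have hsub : ∀ n, n + 1 - Nat.sqrt (n + 1) ≤ n := fun n => by
    have : 0 < Nat.sqrt (n + 1) := Nat.sqrt_pos.2 (Nat.succ_pos n)
    omega
  rcases hmono with hmono | hanti
  · refine tendsto_of_tendsto_of_tendsto_of_le_of_le tendsto_const_nhds hlim' (fun n => ?_)
      (fun n => ?_)
    · exact (one_le_div (hpos n)).2 (hmono n.le_succ)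
    · exact div_le_div_of_nonneg_left (hpos _).le (hpos _) (hmono (hsub n))
  · refine tendsto_of_tendsto_of_tendsto_of_le_of_le hlim' tendsto_const_nhds (fun n => ?_)
      (fun n => ?_)
    · exact div_le_div_of_nonneg_left (hpos _).le (hpos _) (hanti (hsub n))
    · exact (div_le_one (hpos n)).2 (hanti n.le_succ)

/-- Asymptotics of partial sums of `z^k/ω_k` for `|z| > 1`. -/
theorem kernel_asymptotics (ω : ℕ → ℝ) (hω : IsWeight ω) (z : ℂ)
    (hz : 1 < ‖z‖) :
    Filter.Tendsto
      (fun N => ((ω N : ℂ) / z ^ (N + 1)) * ∑ k ∈ Finset.range (N + 1), z ^ k / (ω k : ℂ))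
      Filter.atTop (nhds (1 / (z - 1))) := by
  obtain ⟨hpos, hmono, -, hlim, -⟩ := hω
  have hratio := tendsto_succ_div_of_tendsto_div_sub_sqrt hpos hmono hlim
  refine tendsto_normalizedPartialSum (fun k => Complex.ofReal_ne_zero.2 (hpos k).ne') ?_ hz
  simpa [Function.comp_def] using (Complex.continuous_ofReal.tendsto 1).comp hratio
end
end

section
/- Let ω : ℕ → (0,∞) be a monotone (nondecreasing or nonincreasing) sequence with ω₀ = 1, and let z₁, z₂ ∈ closure(𝔻) with z₁ ≠ z₂. Then for every n ∈ ℕ, |∑_{k=0}^n z̄₂^k z₁^k/ω_k| ≤ (2/|1 − z̄₂ z₁|)·(2/ω_n + 1). -/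
open Polynomial Filter Topology MeasureTheory Metric Asymptotics

noncomputable section

/-!
Write `w = z̄₂ z₁`. Then `|w| ≤ 1` and `w ≠ 1`, so every partial sum of the geometric
series `∑ wᵏ` has modulus at most `2 / |1 - w|`. Summation by parts against the monotone
coefficients `1/ω_k` bounds the kernel by that constant times `1/ω_n` plus the total
variation `|1/ω_n - 1/ω_0| ≤ 1/ω_n + 1` of the coefficients.
-/

open Finset

theorem norm_geom_sum_le_of_norm_le_one {K : Type*} [NormedDivisionRing K] {w : K}
    (hw : ‖w‖ ≤ 1) (hw1 : w ≠ 1) (m : ℕ) :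
    ‖∑ i ∈ range m, w ^ i‖ ≤ 2 / ‖1 - w‖ := by
  rw [geom_sum_eq hw1, norm_div, norm_sub_rev w]
  gcongr
  calc ‖w ^ m - 1‖ ≤ ‖w ^ m‖ + ‖(1 : K)‖ := norm_sub_le _ _
    _ ≤ 1 + 1 := by
        rw [norm_pow, norm_one]
        gcongr
        exact pow_le_one₀ (norm_nonneg w) hw
    _ = 2 := one_add_one_eq_two

theorem norm_sum_range_smul_le {E : Type*} [SeminormedAddCommGroup E] [NormedSpace ℝ E]
    {f : ℕ → ℝ} {g : ℕ → E} {M : ℝ} (hg : ∀ m, ‖∑ i ∈ range m, g i‖ ≤ M) (n : ℕ) :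
    ‖∑ i ∈ range (n + 1), f i • g i‖ ≤ M * (|f n| + ∑ i ∈ range n, |f (i + 1) - f i|) := by
  rw [sum_range_by_parts, Nat.add_sub_cancel]
  calc _ ≤ ‖f n • ∑ i ∈ range (n + 1), g i‖
          + ‖∑ i ∈ range n, (f (i + 1) - f i) • ∑ j ∈ range (i + 1), g j‖ :=
        norm_sub_le _ _
    _ ≤ |f n| * M + ∑ i ∈ range n, |f (i + 1) - f i| * M := by
        gcongr
        · exact (norm_smul_le _ _).trans (by rw [Real.norm_eq_abs]; gcongr; exact hg _)
        · refine (norm_sum_le _ _).trans (sum_le_sum fun i _ => ?_)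
          exact (norm_smul_le _ _).trans (by rw [Real.norm_eq_abs]; gcongr; exact hg _)
    _ = M * (|f n| + ∑ i ∈ range n, |f (i + 1) - f i|) := by rw [← sum_mul]; ring

theorem Monotone.sum_range_abs_sub_succ {f : ℕ → ℝ} (hf : Monotone f) (n : ℕ) :
    ∑ i ∈ range n, |f (i + 1) - f i| = f n - f 0 := by
  rw [← sum_range_sub]
  exact sum_congr rfl fun i _ => abs_of_nonneg (sub_nonneg.2 (hf i.le_succ))

theorem Antitone.sum_range_abs_sub_succ {f : ℕ → ℝ} (hf : Antitone f) (n : ℕ) :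
    ∑ i ∈ range n, |f (i + 1) - f i| = f 0 - f n := by
  rw [← sum_range_sub']
  exact sum_congr rfl fun i _ => by
    rw [abs_sub_comm]; exact abs_of_nonneg (sub_nonneg.2 (hf i.le_succ))

theorem sum_range_abs_sub_succ_of_monotone_or_antitone {f : ℕ → ℝ}
    (hf : Monotone f ∨ Antitone f) (n : ℕ) :
    ∑ i ∈ range n, |f (i + 1) - f i| = |f n - f 0| := by
  rcases hf with hf | hf
  · rw [hf.sum_range_abs_sub_succ, abs_of_nonneg (sub_nonneg.2 (hf n.zero_le))]
  · rw [hf.sum_range_abs_sub_succ, abs_sub_comm, abs_of_nonneg (sub_nonneg.2 (hf n.zero_le))]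

theorem one_div_monotone_or_antitone {ω : ℕ → ℝ} (hpos : ∀ k, 0 < ω k)
    (hmono : Monotone ω ∨ Antitone ω) :
    Monotone (fun k => 1 / ω k) ∨ Antitone (fun k => 1 / ω k) := by
  rcases hmono with hm | hm
  · exact Or.inr fun i j hij => one_div_le_one_div_of_le (hpos i) (hm hij)
  · exact Or.inl fun i j hij => one_div_le_one_div_of_le (hpos j) (hm hij)

theorem Complex.conj_mul_ne_one_of_mem_closedBall {z₁ z₂ : ℂ}
    (h₁ : z₁ ∈ Metric.closedBall (0 : ℂ) 1) (h₂ : z₂ ∈ Metric.closedBall (0 : ℂ) 1)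
    (hne : z₁ ≠ z₂) : starRingEnd ℂ z₂ * z₁ ≠ 1 := by
  intro h
  rw [mem_closedBall_zero_iff] at h₁ h₂
  have hprod : ‖z₂‖ * ‖z₁‖ = 1 := by
    simpa [Complex.norm_conj] using congrArg norm h
  have hz₂ : ‖z₂‖ = 1 :=
    le_antisymm h₂ (by nlinarith [norm_nonneg z₁, norm_nonneg z₂])
  -- multiply `z̄₂ z₁ = 1` by `z₂` and use `z₂ z̄₂ = |z₂|² = 1`
  have : z₂ * (starRingEnd ℂ z₂ * z₁) = z₂ := by rw [h, mul_one]
  rw [← mul_assoc, Complex.mul_conj, Complex.normSq_eq_norm_sq, hz₂] at this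
  exact hne (by simpa using this)

/-- Explicit bound for the truncated kernels at distinct points of the closed disk. -/
theorem kernel_explicit_bound (ω : ℕ → ℝ) (hpos : ∀ k, 0 < ω k)
    (hmono : Monotone ω ∨ Antitone ω) (hω0 : ω 0 = 1) (z₁ z₂ : ℂ)
    (h₁ : z₁ ∈ Metric.closedBall (0 : ℂ) 1) (h₂ : z₂ ∈ Metric.closedBall (0 : ℂ) 1)
    (hne : z₁ ≠ z₂) :
    ∀ n : ℕ,
      ‖∑ k ∈ Finset.range (n + 1), (starRingEnd ℂ z₂) ^ k * z₁ ^ k / (ω k : ℂ)‖ ≤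
        2 / ‖1 - starRingEnd ℂ z₂ * z₁‖ * (2 / ω n + 1) := by
  intro n
  set w := starRingEnd ℂ z₂ * z₁
  have hw : ‖w‖ ≤ 1 := by
    rw [mem_closedBall_zero_iff] at h₁ h₂
    rw [norm_mul, Complex.norm_conj]
    exact mul_le_one₀ h₂ (norm_nonneg _) h₁
  have hw1 : w ≠ 1 := Complex.conj_mul_ne_one_of_mem_closedBall h₁ h₂ hne
  have hterm (k : ℕ) :
      starRingEnd ℂ z₂ ^ k * z₁ ^ k / (ω k : ℂ) = (1 / ω k) • w ^ k := by
    rw [Complex.real_smul, mul_pow]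
    push_cast
    ring
  have hωn : 0 < 1 / ω n := one_div_pos.2 (hpos n)
  rw [sum_congr rfl fun k _ => hterm k]
  calc _ ≤ 2 / ‖1 - w‖ * (|1 / ω n| + ∑ i ∈ range n, |1 / ω (i + 1) - 1 / ω i|) :=
        norm_sum_range_smul_le (norm_geom_sum_le_of_norm_le_one hw hw1) n
    _ = 2 / ‖1 - w‖ * (1 / ω n + |1 / ω n - 1|) := by
        rw [sum_range_abs_sub_succ_of_monotone_or_antitone
            (one_div_monotone_or_antitone hpos hmono), abs_of_pos hωn, hω0, div_one]
    _ ≤ 2 / ‖1 - w‖ * (2 / ω n + 1) := by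
        refine mul_le_mul_of_nonneg_left ?_ (by positivity)
        have : |1 / ω n - 1| ≤ 1 / ω n + 1 := abs_sub_le_iff.2 ⟨by linarith, by linarith⟩
        linarith [show 2 / ω n = 1 / ω n + 1 / ω n by ring]

end
end

section
/- Let ω be a weight, let 1 ≤ d₁ ≤ d be integers, and let z₁,…,z_d ∈ ℂ be distinct points with |z_i| = 1 for 1 ≤ i ≤ d₁ and |z_i| > 1 for d₁ < i ≤ d. Let E be the d×d matrix with entries e_{l,m} = k_{n+d}(z_l, z_m). Then there exists a constant δ > 0, independent of n, such that for every n ∈ ℕ, det(E) ≥ δ · (S_{n+d}^{d₁}/ω_{n+d}^{d−d₁}) · ∏_{l=1}^d |z_l|^{2(n+d+1)}. -/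
open Polynomial Filter Topology MeasureTheory Metric Asymptotics

noncomputable section

/-!
`E n` is the transposed Gram matrix of the vectors `v_l = (z_l^k / √ω_k)_{k ≤ N}`, `N = n + d`,
so its determinant is the product of the squared lengths of their Gram–Schmidt vectors. Each
of these lengths is a weighted norm `∑_{k ≤ N} |∑_j a_j z_j^k|² / ω_k` of an exponential sum
with `a_i = 1`. Since the Vandermonde matrix of the distinct nodes is invertible, every `d`
consecutive terms `|∑_j a_j z_j^k|²`, `t ≤ k < t + d`, add up to at least `|z_i|^{2t} / C`.
For `|z_i| = 1` averaging over all windows gives a bound of order `S_N`; for the other points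
the last window alone gives one of order `|z_i|^{2N} / ω_N`, because the regularity of the
weight forces `ω_k ≤ 2 ω_N` there. For the finitely many remaining `n` the factors are merely
positive.
-/

open Finset InnerProductSpace Matrix

section Gram

variable {𝕜 E ι : Type*} [RCLike 𝕜] [NormedAddCommGroup E] [InnerProductSpace 𝕜 E]
  [LinearOrder ι] [LocallyFiniteOrderBot ι] [WellFoundedLT ι]

theorem exists_gramSchmidt_eq_sum_smul [Fintype ι] (v : ι → E) (i : ι) :
    ∃ a : ι → 𝕜, a i = 1 ∧ gramSchmidt 𝕜 v i = ∑ j, a j • v j := by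
  have hmem : v i - gramSchmidt 𝕜 v i ∈ Submodule.span 𝕜 (v '' Set.Iio i) := by
    rw [← span_gramSchmidt_Iio, gramSchmidt_def, sub_sub_cancel]
    refine Submodule.sum_mem _ fun j hj => ?_
    rw [Submodule.starProjection_singleton]
    exact Submodule.smul_mem _ _ (Submodule.subset_span ⟨j, by simpa using hj, rfl⟩)
  obtain ⟨l, hl, hsum⟩ := (Finsupp.mem_span_image_iff_linearCombination 𝕜).1 hmem
  refine ⟨Pi.single i 1 - ⇑l, ?_, ?_⟩
  · have : l i = 0 := Finsupp.notMem_support_iff.1 fun h => lt_irrefl i (hl h)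
    simp [this]
  · rw [Finsupp.linearCombination_apply, Finsupp.sum_fintype _ _ (by simp)] at hsum
    simp [sub_smul, Finset.sum_sub_distrib, hsum]

theorem det_gram_eq_prod_norm_gramSchmidt_sq [Fintype ι] [DecidableEq ι] (v : ι → E) :
    (gram 𝕜 v).det = ∏ i, ((‖gramSchmidt 𝕜 v i‖ ^ 2 : ℝ) : 𝕜) := by
  set u := gramSchmidt 𝕜 v
  set T : Matrix ι ι 𝕜 := of fun i j =>
    if j < i then ⟪u j, v i⟫_𝕜 / (‖u j‖ : 𝕜) ^ 2 else if i = j then 1 else 0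
  have hv : ∀ i, v i = ∑ j, T i j • u j := by
    intro i
    rw [← Finset.add_sum_erase _ _ (Finset.mem_univ i), ← Finset.sum_subset
      (s₁ := Iio i) (fun j hj => by simpa using (Finset.mem_Iio.1 hj).ne) fun j hji hj => ?_]
    · conv_lhs => rw [gramSchmidt_def'' 𝕜 v i]
      refine congr_arg₂ _ (by simp [T, u]) (Finset.sum_congr rfl fun j hj => ?_)
      simp [T, u, Finset.mem_Iio.1 hj]
    · have : ¬ j < i := by simpa using hj
      simp [T, this, (Finset.ne_of_mem_erase hji).symm]
  have hgram : gram 𝕜 v = Tᵀᴴ * gram 𝕜 u * Tᵀ := by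
    ext a b
    simp only [gram_apply, hv a, hv b, sum_inner, inner_sum, inner_smul_left, inner_smul_right,
      mul_apply, transpose_apply, conjTranspose_apply, Finset.sum_mul, Finset.mul_sum,
      RCLike.star_def]
    refine Finset.sum_congr rfl fun j _ => Finset.sum_congr rfl fun k _ => ?_
    ring
  have hu : gram 𝕜 u = diagonal fun i => ((‖u i‖ ^ 2 : ℝ) : 𝕜) := by
    ext a b
    rcases eq_or_ne a b with rfl | hab
    · simp [inner_self_eq_norm_sq_to_K]
    · simpa [hab] using gramSchmidt_orthogonal 𝕜 v hab
  have hT : T.det = 1 := by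
    rw [det_of_isLowerTriangular T fun i j hij => ?_]
    · simp [T]
    · have hij : i < j := hij
      simp [T, hij.not_gt, hij.ne]
  rw [hgram, det_mul, det_mul, det_conjTranspose, det_transpose, hT, hu, det_diagonal]
  simp

end Gram

def powerSum {ι : Type*} [Fintype ι] (ζ a : ι → ℂ) (k : ℕ) : ℂ := ∑ j, a j * ζ j ^ k

theorem exists_norm_sq_le_sum_powerSum {r : ℕ} {ζ : Fin r → ℂ} (hζ : Function.Injective ζ) :
    ∃ C > 0, ∀ (a : Fin r → ℂ) (t : ℕ) (i : Fin r),
      ‖ζ i ^ t * a i‖ ^ 2 ≤ C * ∑ s ∈ range r, ‖powerSum ζ a (t + s)‖ ^ 2 := by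
  set f := toLpLin 2 2 (vandermonde ζ)ᵀ
  have hf : LinearMap.ker f = ⊥ := by
    refine LinearMap.ker_eq_bot'.2 fun b hb => ?_
    have := eq_zero_of_forall_pow_sum_mul_pow_eq_zero hζ (v := b.ofLp) fun s => by
      simpa [f, toLpLin_apply, mulVec, dotProduct, mul_comm] using congr_arg (· s) hb
    simpa using congr_arg (WithLp.toLp 2) this
  obtain ⟨K, hK0, hK⟩ := f.exists_antilipschitzWith hf
  refine ⟨K ^ 2, by positivity, fun a t i => ?_⟩
  set b : EuclideanSpace ℂ (Fin r) := WithLp.toLp 2 fun j => ζ j ^ t * a j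
  have hfb : ∀ s : Fin r, f b s = powerSum ζ a (t + s) := fun s => by
    simp only [f, b, toLpLin_apply, mulVec, dotProduct, transpose_apply, vandermonde_apply,
      powerSum, pow_add]
    exact Finset.sum_congr rfl fun j _ => by ring
  calc ‖ζ i ^ t * a i‖ ^ 2 ≤ ‖b‖ ^ 2 := by
        rw [EuclideanSpace.norm_sq_eq]
        exact Finset.single_le_sum (f := fun j => ‖b j‖ ^ 2) (fun _ _ => by positivity) (mem_univ i)
    _ ≤ (K * ‖f b‖) ^ 2 := by gcongr; exact hK.le_mul_norm (map_zero f) b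
    _ = K ^ 2 * ∑ s ∈ range r, ‖powerSum ζ a (t + s)‖ ^ 2 := by
        rw [mul_pow, EuclideanSpace.norm_sq_eq, ← Fin.sum_univ_eq_sum_range]
        simp only [hfb]

def powVec (ω : ℕ → ℝ) (N : ℕ) (ζ : ℂ) : EuclideanSpace ℂ (Fin (N + 1)) :=
  WithLp.toLp 2 fun k => ζ ^ (k : ℕ) / (√(ω k) : ℂ)

theorem inner_powVec {ω : ℕ → ℝ} (hω : ∀ k, 0 ≤ ω k) (N : ℕ) (b z : ℂ) :
    ⟪powVec ω N b, powVec ω N z⟫_ℂ = kN ω N z b := by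
  rw [kN, ← Fin.sum_univ_eq_sum_range (fun k => (starRingEnd ℂ) b ^ k * z ^ k / (ω k : ℂ))]
  refine Finset.sum_congr rfl fun k _ => ?_
  have hsq : (√(ω k) : ℂ) * √(ω k) = ω k := by
    rw [← Complex.ofReal_mul, Real.mul_self_sqrt (hω k)]
  simp only [powVec, RCLike.inner_apply, map_div₀, map_pow, Complex.conj_ofReal]
  rw [div_mul_div_comm, hsq, mul_comm (z ^ (k : ℕ))]

theorem norm_sum_smul_powVec_sq {ι : Type*} [Fintype ι] {ω : ℕ → ℝ} (hω : ∀ k, 0 ≤ ω k)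
    (N : ℕ) (ζ a : ι → ℂ) :
    ‖∑ j, a j • powVec ω N (ζ j)‖ ^ 2 = ∑ k ∈ range (N + 1), ‖powerSum ζ a k‖ ^ 2 / ω k := by
  rw [EuclideanSpace.norm_sq_eq,
    ← Fin.sum_univ_eq_sum_range (fun k => ‖powerSum ζ a k‖ ^ 2 / ω k)]
  refine Finset.sum_congr rfl fun k _ => ?_
  simp only [powVec, WithLp.ofLp_sum, WithLp.ofLp_smul, Finset.sum_apply, Pi.smul_apply,
    smul_eq_mul, ← mul_div_assoc, ← Finset.sum_div]
  rw [← powerSum, norm_div, div_pow, Complex.norm_real, Real.norm_eq_abs, sq_abs,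
    Real.sq_sqrt (hω k)]

theorem det_kN_eq_prod_norm_gramSchmidt_sq {ω : ℕ → ℝ} (hω : ∀ k, 0 ≤ ω k) (N : ℕ) {d : ℕ}
    (ζ : Fin d → ℂ) :
    (of fun l m : Fin d => kN ω N (ζ l) (ζ m)).det =
      ∏ i, ((‖gramSchmidt ℂ (fun l => powVec ω N (ζ l)) i‖ ^ 2 : ℝ) : ℂ) := by
  have hgram : (of fun l m : Fin d => kN ω N (ζ l) (ζ m))ᵀ = gram ℂ fun l => powVec ω N (ζ l) := by
    ext l m
    simp [inner_powVec hω]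
  rw [← det_transpose, hgram]
  exact det_gram_eq_prod_norm_gramSchmidt_sq _

theorem sum_range_sum_range_add_le {f : ℕ → ℝ} (hf : ∀ k, 0 ≤ f k) (L r : ℕ) :
    ∑ t ∈ range L, ∑ s ∈ range r, f (t + s) ≤ r * ∑ k ∈ range (L + r - 1), f k := by
  rw [Finset.sum_comm]
  calc ∑ s ∈ range r, ∑ t ∈ range L, f (t + s)
        ≤ ∑ _s ∈ range r, ∑ k ∈ range (L + r - 1), f k := Finset.sum_le_sum fun s hs => ?_
    _ = r * ∑ k ∈ range (L + r - 1), f k := by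
        rw [Finset.sum_const, Finset.card_range, nsmul_eq_mul]
  have hs : s < r := Finset.mem_range.1 hs
  calc ∑ t ∈ range L, f (t + s) = ∑ k ∈ Ico s (s + L), f k := by
        rw [Finset.sum_Ico_eq_sum_range, Nat.add_sub_cancel_left]
        exact Finset.sum_congr rfl fun t _ => by rw [add_comm]
    _ ≤ ∑ k ∈ range (L + r - 1), f k :=
        Finset.sum_le_sum_of_subset_of_nonneg
          (fun k hk => by simp only [Finset.mem_Ico, Finset.mem_range] at hk ⊢; omega)
          fun k _ _ => hf k

theorem le_add_of_monotone_or_antitone {φ : ℕ → ℝ} (hφ : Monotone φ ∨ Antitone φ) {k N : ℕ}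
    (hk : k ≤ N) (h0 : 0 ≤ φ 0) (hN : 0 ≤ φ N) : φ k ≤ φ 0 + φ N := by
  rcases hφ with h | h
  · linarith [h hk]
  · linarith [h (Nat.zero_le k)]

theorem sum_range_sub_le_sum_range_add {φ : ℕ → ℝ} (hφ : Monotone φ ∨ Antitone φ)
    (hφ0 : ∀ k, 0 ≤ φ k) {c L N r : ℕ} (hcL : c + L ≤ N + 1) (hr : N + 1 ≤ L + r) :
    ∑ k ∈ range (N + 1), φ k - r * (φ 0 + φ N) ≤ ∑ t ∈ range L, φ (t + c) := by
  have hsub : Ico c (c + L) ⊆ range (N + 1) := fun k hk => by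
    simp only [Finset.mem_Ico, Finset.mem_range] at hk ⊢; omega
  have hrest : ∑ k ∈ range (N + 1) \ Ico c (c + L), φ k ≤ r * (φ 0 + φ N) := by
    calc _ ≤ #(range (N + 1) \ Ico c (c + L)) • (φ 0 + φ N) :=
          Finset.sum_le_card_nsmul _ _ _ fun k hk => le_add_of_monotone_or_antitone hφ
            (Nat.lt_succ_iff.1 (Finset.mem_range.1 (Finset.mem_sdiff.1 hk).1)) (hφ0 0) (hφ0 N)
      _ ≤ r * (φ 0 + φ N) := by
        rw [nsmul_eq_mul, Finset.card_sdiff_of_subset hsub, Nat.card_Ico, Finset.card_range]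
        gcongr
        · exact add_nonneg (hφ0 0) (hφ0 N)
        · exact_mod_cast (by omega : N + 1 - (c + L - c) ≤ r)
  have hIco : ∑ t ∈ range L, φ (t + c) = ∑ k ∈ Ico c (c + L), φ k := by
    rw [Finset.sum_Ico_eq_sum_range, Nat.add_sub_cancel_left]
    exact Finset.sum_congr rfl fun t _ => by rw [add_comm]
  rw [hIco, ← Finset.sum_sdiff hsub]
  linarith

theorem mul_S_sub_le_of_forall_window {ω : ℕ → ℝ} (hpos : ∀ k, 0 < ω k)
    (hmono : Monotone ω ∨ Antitone ω) {G : ℕ → ℝ} (hG : ∀ k, 0 ≤ G k) {r N : ℕ} (hr : 0 < r)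
    (hrN : r ≤ N + 1) {ε : ℝ} (hε : 0 ≤ ε)
    (hwin : ∀ t, t + r ≤ N + 1 → ε ≤ ∑ s ∈ range r, G (t + s)) :
    ε * (S ω N - r * (1 / ω 0 + 1 / ω N)) ≤ r * ∑ k ∈ range (N + 1), G k / ω k := by
  set L := N + 2 - r
  have hφ : ∀ k, 0 ≤ 1 / ω k := fun k => (one_div_pos.2 (hpos k)).le
  have hφmono : Monotone (fun k => 1 / ω k) ∨ Antitone (fun k => 1 / ω k) :=
    hmono.symm.imp (fun h _ _ hab => one_div_le_one_div_of_le (hpos _) (h hab))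
      fun h _ _ hab => one_div_le_one_div_of_le (hpos _) (h hab)
  -- in each window `[t, t + r)`, compare with the smallest value of `1 / ω`, taken at `t + c`
  obtain ⟨c, hcL, hc⟩ : ∃ c, c + L ≤ N + 1 ∧
      ∀ t < L, ∀ s < r, 1 / ω (t + c) ≤ 1 / ω (t + s) := by
    rcases hmono with h | h
    · exact ⟨r - 1, by omega, fun t _ s hs => one_div_le_one_div_of_le (hpos _) (h (by omega))⟩
    · exact ⟨0, by omega, fun t _ s _ => one_div_le_one_div_of_le (hpos _) (h (by omega))⟩
  have hS : S ω N - r * (1 / ω 0 + 1 / ω N) ≤ ∑ t ∈ range L, 1 / ω (t + c) :=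
    sum_range_sub_le_sum_range_add hφmono hφ hcL (by omega)
  calc ε * (S ω N - r * (1 / ω 0 + 1 / ω N)) ≤ (∑ t ∈ range L, 1 / ω (t + c)) * ε := by
        rw [mul_comm]; exact mul_le_mul_of_nonneg_right hS hε
    _ ≤ ∑ t ∈ range L, ∑ s ∈ range r, G (t + s) / ω (t + s) := by
        rw [Finset.sum_mul]
        refine Finset.sum_le_sum fun t ht => ?_
        have ht : t < L := Finset.mem_range.1 ht
        calc 1 / ω (t + c) * ε ≤ 1 / ω (t + c) * ∑ s ∈ range r, G (t + s) :=
              mul_le_mul_of_nonneg_left (hwin t (by omega)) (hφ _)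
          _ ≤ _ := by
            rw [Finset.mul_sum]
            refine Finset.sum_le_sum fun s hs => ?_
            exact (mul_le_mul_of_nonneg_right (hc t ht s (Finset.mem_range.1 hs)) (hG _)).trans_eq
              (by ring)
    _ ≤ r * ∑ k ∈ range (N + 1), G k / ω k := by
        convert sum_range_sum_range_add_le (fun k => div_nonneg (hG k) (hpos k).le) L r using 4
        omega

theorem exists_pos_forall_mul_le_of_eventually {f g : ℕ → ℝ} (hf : ∀ n, 0 < f n)
    (hg : ∀ n, 0 ≤ g n) (h : ∃ c > 0, ∀ᶠ n in atTop, c * g n ≤ f n) :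
    ∃ δ > 0, ∀ n, δ * g n ≤ f n := by
  obtain ⟨c, hc, hev⟩ := h
  obtain ⟨N, hN⟩ := eventually_atTop.1 hev
  clear hev
  induction N generalizing c with
  | zero => exact ⟨c, hc, fun n => hN n n.zero_le⟩
  | succ N ih =>
    have hgN : 0 < g N + 1 := by linarith [hg N]
    refine ih (min c (f N / (g N + 1))) (lt_min hc (div_pos (hf N) hgN)) fun n hn => ?_
    rcases hn.eq_or_lt with rfl | hn
    · calc min c (f N / (g N + 1)) * g N ≤ f N / (g N + 1) * (g N + 1) :=
            mul_le_mul (min_le_right _ _) (by linarith) (hg N) (div_pos (hf N) hgN).le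
        _ = f N := div_mul_cancel₀ _ hgN.ne'
    · exact (mul_le_mul_of_nonneg_right (min_le_left _ _) (hg n)).trans (hN n hn)

theorem prod_ite_val_lt {d d₁ : ℕ} (hd : d₁ ≤ d) (x y : ℝ) :
    ∏ i : Fin d, (if (i : ℕ) < d₁ then x else y) = x ^ d₁ * y ^ (d - d₁) := by
  rw [Fin.prod_univ_eq_prod_range (fun i => if i < d₁ then x else y),
    ← Finset.prod_range_mul_prod_Ico _ hd,
    Finset.prod_congr rfl fun i hi => if_pos (Finset.mem_range.1 hi),
    Finset.prod_congr rfl fun i hi => if_neg (Finset.mem_Ico.1 hi).1.not_gt]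
  simp

theorem prod_fin_eq_prod_Icc {M : Type*} [CommMonoid M] (f : ℕ → M) (d : ℕ) :
    ∏ i : Fin d, f (i + 1) = ∏ l ∈ Icc 1 d, f l := by
  rw [Fin.prod_univ_eq_prod_range (fun i => f (i + 1)), ← Finset.Ico_add_one_right_eq_Icc,
    Finset.prod_Ico_eq_prod_range]
  simp [add_comm]

namespace IsWeight

variable {ω : ℕ → ℝ} (hω : IsWeight ω)
include hω

theorem pos (k : ℕ) : 0 < ω k := hω.1 k

theorem monotone_or_antitone : Monotone ω ∨ Antitone ω := hω.2.1

theorem S_pos (N : ℕ) : 0 < S ω N :=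
  Finset.sum_pos (fun k _ => one_div_pos.2 (hω.pos k)) nonempty_range_add_one

theorem tendsto_S_atTop : Tendsto (S ω) atTop atTop :=
  ((not_summable_iff_tendsto_nat_atTop_of_nonneg fun k => (one_div_pos.2 (hω.pos k)).le).1
    hω.2.2.2.2).comp (tendsto_add_atTop_nat 1)

theorem eventually_le_two_mul_sub_sqrt : ∀ᶠ N in atTop, ω (N - Nat.sqrt N) ≤ 2 * ω N := by
  filter_upwards [hω.2.2.2.1.eventually (eventually_ge_nhds (by norm_num : (1 / 2 : ℝ) < 1))]
    with N hN
  rw [le_div_iff₀ (hω.pos _)] at hN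
  linarith

theorem eventually_le_two_mul (j : ℕ) :
    ∀ᶠ N in atTop, ∀ k, N ≤ k + j → k ≤ N → ω k ≤ 2 * ω N := by
  rcases hω.monotone_or_antitone with hmono | hanti
  · exact Eventually.of_forall fun N k _ hk => by linarith [hmono hk, hω.pos N]
  · filter_upwards [hω.eventually_le_two_mul_sub_sqrt,
      eventually_atTop.2 ⟨j * j, fun N hN => Nat.le_sqrt.2 hN⟩] with N hN hj k hk _
    exact (hanti (by omega)).trans hN

theorem tendsto_mul_S_atTop : Tendsto (fun N => ω N * S ω N) atTop atTop := by
  rcases hω.monotone_or_antitone with hmono | hanti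
  · refine tendsto_atTop_mono (fun N => ?_) hω.tendsto_S_atTop
    have : 1 ≤ ω N := hω.2.2.1 ▸ hmono (Nat.zero_le N)
    nlinarith [hω.S_pos N]
  refine tendsto_atTop.2 fun c => ?_
  filter_upwards [hω.eventually_le_two_mul_sub_sqrt,
    eventually_atTop.2 ⟨⌈2 * c⌉₊ * ⌈2 * c⌉₊, fun N hN => Nat.le_sqrt.2 hN⟩] with N hN hc
  set M := N - Nat.sqrt N
  have hS : (Nat.sqrt N + 1) * (1 / ω M) ≤ S ω N := by
    calc (Nat.sqrt N + 1) * (1 / ω M) = #(Ico M (N + 1)) • (1 / ω M) := by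
          rw [nsmul_eq_mul, Nat.card_Ico]
          have := Nat.sqrt_le_self N
          push_cast [show N + 1 - M = Nat.sqrt N + 1 by omega]
          ring
      _ ≤ ∑ k ∈ Ico M (N + 1), 1 / ω k :=
          Finset.card_nsmul_le_sum _ _ _ fun k hk =>
            one_div_le_one_div_of_le (hω.pos k) (hanti (Finset.mem_Ico.1 hk).1)
      _ ≤ S ω N := Finset.sum_le_sum_of_subset_of_nonneg
          (fun k hk => Finset.mem_range.2 (Finset.mem_Ico.1 hk).2)
          fun k _ _ => (one_div_pos.2 (hω.pos k)).le
  have hc' : 2 * c ≤ Nat.sqrt N := (Nat.le_ceil _).trans (by exact_mod_cast hc)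
  have hratio : 1 / 2 ≤ ω N / ω M := by rw [le_div_iff₀ (hω.pos M)]; linarith
  calc c ≤ (Nat.sqrt N + 1) * (ω N / ω M) := by nlinarith
    _ = ω N * ((Nat.sqrt N + 1) * (1 / ω M)) := by ring
    _ ≤ ω N * S ω N := mul_le_mul_of_nonneg_left hS (hω.pos N).le

theorem eventually_mul_add_le_S (c : ℝ) :
    ∀ᶠ N in atTop, c * (1 / ω 0 + 1 / ω N) ≤ S ω N := by
  filter_upwards [hω.tendsto_S_atTop.eventually_ge_atTop (2 * c / ω 0),
    hω.tendsto_mul_S_atTop.eventually_ge_atTop (2 * c)] with N h1 h2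
  have h3 : 2 * c / ω N ≤ S ω N := by rw [div_le_iff₀ (hω.pos N)]; linarith
  linarith [show c * (1 / ω 0 + 1 / ω N) = (2 * c / ω 0 + 2 * c / ω N) / 2 by ring]

end IsWeight

section PowerSumEnergy

variable {ω : ℕ → ℝ} {d : ℕ} {ζ : Fin d → ℂ}

theorem sum_norm_powerSum_sq_div_pos (hpos : ∀ k, 0 < ω k) (hζ : Function.Injective ζ)
    {a : Fin d → ℂ} (ha : a ≠ 0) {N : ℕ} (hN : d ≤ N + 1) :
    0 < ∑ k ∈ range (N + 1), ‖powerSum ζ a k‖ ^ 2 / ω k := by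
  obtain ⟨s, hs⟩ : ∃ s : Fin d, powerSum ζ a s ≠ 0 := by
    by_contra! h
    exact ha (eq_zero_of_forall_pow_sum_mul_pow_eq_zero hζ h)
  exact Finset.sum_pos' (fun k _ => div_nonneg (sq_nonneg _) (hpos k).le)
    ⟨s, Finset.mem_range.2 (by omega), div_pos (pow_pos (norm_pos_iff.2 hs) 2) (hpos s)⟩

theorem exists_pos_eventually_mul_S_le (hω : IsWeight ω) (hζ : Function.Injective ζ)
    {i : Fin d} (hi : ‖ζ i‖ = 1) :
    ∃ c > 0, ∀ᶠ N in atTop, ∀ a : Fin d → ℂ, a i = 1 →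
      c * S ω N ≤ ∑ k ∈ range (N + 1), ‖powerSum ζ a k‖ ^ 2 / ω k := by
  obtain ⟨C, hC, hwin⟩ := exists_norm_sq_le_sum_powerSum hζ
  have hd : (0 : ℝ) < d := by exact_mod_cast i.pos
  refine ⟨1 / (2 * d * C), by positivity, ?_⟩
  filter_upwards [hω.eventually_mul_add_le_S (2 * d), eventually_ge_atTop d] with N hS hN a ha
  have hwin' : ∀ t, t + d ≤ N + 1 → 1 / C ≤ ∑ s ∈ range d, ‖powerSum ζ a (t + s)‖ ^ 2 :=
    fun t _ => by
      rw [div_le_iff₀ hC, mul_comm]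
      simpa [hi, ha] using hwin a t i
  have := mul_S_sub_le_of_forall_window hω.pos hω.monotone_or_antitone
    (fun k => sq_nonneg ‖powerSum ζ a k‖) i.pos (by omega) (by positivity) hwin'
  set X := ∑ k ∈ range (N + 1), ‖powerSum ζ a k‖ ^ 2 / ω k
  calc 1 / (2 * d * C) * S ω N = 1 / C * (S ω N / 2) / d := by field_simp
    _ ≤ 1 / C * (S ω N - d * (1 / ω 0 + 1 / ω N)) / d := by gcongr; linarith
    _ ≤ d * X / d := by gcongr
    _ = X := by field_simp

theorem exists_pos_eventually_mul_pow_div_le (hω : IsWeight ω) (hζ : Function.Injective ζ)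
    (i : Fin d) :
    ∃ c > 0, ∀ᶠ N in atTop, ∀ a : Fin d → ℂ, a i = 1 →
      c * (‖ζ i‖ ^ (2 * (N + 1)) / ω N) ≤ ∑ k ∈ range (N + 1), ‖powerSum ζ a k‖ ^ 2 / ω k := by
  obtain ⟨C, hC, hwin⟩ := exists_norm_sq_le_sum_powerSum hζ
  refine ⟨1 / (2 * C * (1 + ‖ζ i‖ ^ (2 * d))), by positivity, ?_⟩
  filter_upwards [hω.eventually_le_two_mul d, eventually_ge_atTop d] with N hω2 hN a ha
  set t := N + 1 - d
  have hG := fun k => sq_nonneg ‖powerSum ζ a k‖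
  have htail : (∑ s ∈ range d, ‖powerSum ζ a (t + s)‖ ^ 2) / (2 * ω N) ≤
      ∑ k ∈ range (N + 1), ‖powerSum ζ a k‖ ^ 2 / ω k := by
    rw [show N + 1 = t + d by omega, Finset.sum_range_add, Finset.sum_div]
    refine le_add_of_nonneg_of_le (Finset.sum_nonneg fun k _ => div_nonneg (hG k)
      (hω.pos k).le) (Finset.sum_le_sum fun s hs => ?_)
    exact div_le_div_of_nonneg_left (hG _) (hω.pos _)
      (hω2 _ (by omega) (by simp at hs; omega))
  have hpow : ‖ζ i‖ ^ (2 * (N + 1)) = ‖ζ i‖ ^ (2 * t) * ‖ζ i‖ ^ (2 * d) := by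
    rw [← pow_add]; congr 1; omega
  have hwt : ‖ζ i‖ ^ (2 * t) ≤ C * ∑ s ∈ range d, ‖powerSum ζ a (t + s)‖ ^ 2 := by
    have := hwin a t i
    rwa [ha, mul_one, norm_pow, ← pow_mul, mul_comm t] at this
  have hωN := hω.pos N
  calc 1 / (2 * C * (1 + ‖ζ i‖ ^ (2 * d))) * (‖ζ i‖ ^ (2 * (N + 1)) / ω N)
        = ‖ζ i‖ ^ (2 * t) * (‖ζ i‖ ^ (2 * d) / (1 + ‖ζ i‖ ^ (2 * d))) / (2 * C * ω N) := by
          rw [hpow]; field_simp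
    _ ≤ ‖ζ i‖ ^ (2 * t) / (2 * C * ω N) := by
          gcongr
          exact mul_le_of_le_one_right (by positivity)
            ((div_le_one (by positivity)).2 (by linarith))
    _ ≤ C * (∑ s ∈ range d, ‖powerSum ζ a (t + s)‖ ^ 2) / (2 * C * ω N) := by gcongr
    _ = (∑ s ∈ range d, ‖powerSum ζ a (t + s)‖ ^ 2) / (2 * ω N) := by field_simp
    _ ≤ _ := htail

theorem exists_pos_forall_mul_le_norm_gramSchmidt_sq (hω : IsWeight ω)
    (hζ : Function.Injective ζ) (i : Fin d) {P : ℕ → ℝ} (hP0 : ∀ N, 0 ≤ P N)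
    (hP : ∃ c > 0, ∀ᶠ N in atTop, ∀ a : Fin d → ℂ, a i = 1 →
      c * P N ≤ ∑ k ∈ range (N + 1), ‖powerSum ζ a k‖ ^ 2 / ω k) :
    ∃ δ > 0, ∀ n, δ * P (n + d) ≤ ‖gramSchmidt ℂ (fun l => powVec ω (n + d) (ζ l)) i‖ ^ 2 := by
  have hgs : ∀ n, ∃ a : Fin d → ℂ, a i = 1 ∧
      ‖gramSchmidt ℂ (fun l => powVec ω (n + d) (ζ l)) i‖ ^ 2 =
        ∑ k ∈ range (n + d + 1), ‖powerSum ζ a k‖ ^ 2 / ω k := fun n => by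
    obtain ⟨a, ha, hsum⟩ := exists_gramSchmidt_eq_sum_smul (𝕜 := ℂ)
      (fun l => powVec ω (n + d) (ζ l)) i
    exact ⟨a, ha, by rw [hsum, norm_sum_smul_powVec_sq fun k => (hω.pos k).le]⟩
  refine exists_pos_forall_mul_le_of_eventually (fun n => ?_) (fun n => hP0 _) ?_
  · obtain ⟨a, ha, hgs⟩ := hgs n
    rw [hgs]
    exact sum_norm_powerSum_sq_div_pos hω.pos hζ (fun h => by simp [h] at ha) (by omega)
  · obtain ⟨c, hc, hev⟩ := hP
    refine ⟨c, hc, ((tendsto_add_atTop_nat d).eventually hev).mono fun n hn => ?_⟩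
    obtain ⟨a, ha, hgs⟩ := hgs n
    exact hgs ▸ hn a ha

end PowerSumEnergy

theorem det_lower_bound_general
    (ω : ℕ → ℝ) (hω : IsWeight ω) (d d₁ : ℕ) (hd : d₁ ≤ d)
    (z : ℕ → ℂ) (hinj : Set.InjOn z (Set.Icc 1 d))
    (hcirc : ∀ i, 1 ≤ i → i ≤ d₁ → ‖z i‖ = 1)
    (E : ℕ → Matrix (Fin d) (Fin d) ℂ)
    (hE : ∀ n, E n = Matrix.of fun (l m : Fin d) =>
      kN ω (n + d) (z ((l : ℕ) + 1)) (z ((m : ℕ) + 1))) :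
    ∃ δ : ℝ, 0 < δ ∧ ∀ n : ℕ, ((E n).det).im = 0 ∧
      δ * (S ω (n + d)) ^ d₁ / (ω (n + d)) ^ (d - d₁) *
        ∏ l ∈ Finset.Icc 1 d, ‖z l‖ ^ (2 * (n + d + 1)) ≤ ((E n).det).re := by
  set ζ : Fin d → ℂ := fun l => z (l + 1)
  have hζ : Function.Injective ζ := fun l m h => Fin.ext <| Nat.succ_injective <|
    hinj ⟨by omega, by omega⟩ ⟨by omega, by omega⟩ h
  -- the order of magnitude of the `i`-th squared Gram–Schmidt length, `N = n + d`
  set P : Fin d → ℕ → ℝ := fun i N =>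
    ‖ζ i‖ ^ (2 * (N + 1)) * if (i : ℕ) < d₁ then S ω N else 1 / ω N
  have hP0 : ∀ i N, 0 ≤ P i N := fun i N => by
    have := hω.S_pos N
    have := hω.pos N
    positivity
  have hP : ∀ i, ∃ c > 0, ∀ᶠ N in atTop, ∀ a : Fin d → ℂ, a i = 1 →
      c * P i N ≤ ∑ k ∈ range (N + 1), ‖powerSum ζ a k‖ ^ 2 / ω k := fun i => by
    by_cases hi : (i : ℕ) < d₁
    · have hζi : ‖ζ i‖ = 1 := hcirc _ (by omega) hi
      simpa only [P, if_pos hi, hζi, one_pow, one_mul] using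
        exists_pos_eventually_mul_S_le hω hζ hζi
    · simpa only [P, if_neg hi, mul_one_div] using exists_pos_eventually_mul_pow_div_le hω hζ i
  choose δ hδ hδD using fun i =>
    exists_pos_forall_mul_le_norm_gramSchmidt_sq hω hζ i (hP0 i) (hP i)
  have hdet : ∀ n, (E n).det = ∏ i, ((‖gramSchmidt ℂ
      (fun l => powVec ω (n + d) (ζ l)) i‖ ^ 2 : ℝ) : ℂ) := fun n => by
    rw [hE]
    exact det_kN_eq_prod_norm_gramSchmidt_sq (fun k => (hω.pos k).le) _ ζ
  refine ⟨∏ i, δ i, Finset.prod_pos fun i _ => hδ i, fun n =>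
    ⟨by rw [hdet, ← Complex.ofReal_prod, Complex.ofReal_im], ?_⟩⟩
  calc _ = ∏ i, δ i * P i (n + d) := by
        simp only [P, Finset.prod_mul_distrib, prod_ite_val_lt hd, ζ,
          prod_fin_eq_prod_Icc (fun l => ‖z l‖ ^ (2 * (n + d + 1)))]
        ring
    _ ≤ _ := Finset.prod_le_prod (fun i _ => mul_nonneg (hδ i).le (hP0 i _)) fun i _ => hδD i n
    _ = ((E n).det).re := by rw [hdet, ← Complex.ofReal_prod, Complex.ofReal_re]

/-- Lower bound for the determinant of the Gram matrix `E`. -/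
theorem det_lower_bound
    (ω : ℕ → ℝ) (hω : IsWeight ω) (d d₁ : ℕ) (hd₁ : 1 ≤ d₁) (hd : d₁ ≤ d)
    (z : ℕ → ℂ) (hinj : Set.InjOn z (Set.Icc 1 d))
    (hcirc : ∀ i, 1 ≤ i → i ≤ d₁ → ‖z i‖ = 1)
    (hout : ∀ i, d₁ < i → i ≤ d → 1 < ‖z i‖)
    (E : ℕ → Matrix (Fin d) (Fin d) ℂ)
    (hE : ∀ n, E n = Matrix.of fun (l m : Fin d) =>
      kN ω (n + d) (z ((l : ℕ) + 1)) (z ((m : ℕ) + 1))) :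
    ∃ δ : ℝ, 0 < δ ∧ ∀ n : ℕ, ((E n).det).im = 0 ∧
      δ * (S ω (n + d)) ^ d₁ / (ω (n + d)) ^ (d - d₁) *
        ∏ l ∈ Finset.Icc 1 d, ‖z l‖ ^ (2 * (n + d + 1)) ≤ ((E n).det).re :=
  det_lower_bound_general ω hω d d₁ hd z hinj hcirc E hE
end
end

section
/- Let d ≥ 2 and let z₂,…,z_d ∈ ℂ ∖ closure(𝔻) be distinct. Then the d×d determinant G = det [[1, v],[sᵗ, B]] is nonzero, where v = (v_m)_{m=2}^d with v_m = 1/z̄_m, B = (b_{l,m})_{l,m=2}^d with b_{l,m} = 1/(z̄_m z_l − 1), and s = (s_l)_{l=2}^d with s_l = 1/(z_l − 1). -/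
/-! Since `1/(z̄ₘ zₗ - 1) = -zₗ⁻¹ (zₗ⁻¹ - z̄ₘ)⁻¹`, the matrix of `G` is the Cauchy matrix
`((xᵢ - yⱼ)⁻¹)` with `x = (0, 1/z₂, …, 1/z_d)` and `y = (1, z̄₂, …, z̄_d)`, its rows scaled by
the nonzero factors `-1, -1/z₂, …, -1/z_d`. The `xᵢ` are distinct points of the open disk and
the `yⱼ` distinct points outside it, and a Cauchy matrix with distinct `xᵢ`, distinct `yⱼ` and
`xᵢ ≠ yⱼ` is nonsingular: for a kernel vector `c`, the barycentric formula shows that the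
Lagrange interpolant on the nodes `yⱼ` of the values `cⱼ / wⱼ` (`wⱼ` the nodal weights)
vanishes at all the `xᵢ`, so it is zero, and hence so is `c`. -/

open Polynomial Filter Topology MeasureTheory Metric Asymptotics

noncomputable section

open Finset Lagrange

theorem Matrix.det_cauchy_ne_zero {K ι : Type*} [Field K] [Fintype ι] [DecidableEq ι]
    {x y : ι → K} (hx : Function.Injective x) (hy : Function.Injective y)
    (hxy : ∀ i j, x i ≠ y j) :
    (of fun i j => (x i - y j)⁻¹).det ≠ 0 := by
  intro hdet
  obtain ⟨c, hc, hker⟩ := exists_mulVec_eq_zero_iff.mpr hdet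
  set w := nodalWeight univ y
  set p := interpolate univ y fun j => c j / w j
  have hp : p = 0 := by
    refine eq_zero_of_degree_lt_of_eval_index_eq_zero univ hx.injOn
      (degree_interpolate_lt _ hy.injOn) fun i _ => ?_
    rw [eval_interpolate_not_at_node _ fun j _ => hxy i j]
    have hrow : ∑ j, (x i - y j)⁻¹ * c j = 0 := congrFun hker i
    rw [← mul_zero (eval (x i) (nodal univ y)), ← hrow]
    congr 1
    refine sum_congr rfl fun j _ => ?_
    have hw : w j ≠ 0 := nodalWeight_ne_zero hy.injOn (mem_univ j)
    rw [mul_right_comm, mul_div_cancel₀ _ hw, mul_comm]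
  refine hc (funext fun j => ?_)
  have hj : p.eval (y j) = c j / w j :=
    eval_interpolate_at_node _ hy.injOn (mem_univ j)
  rw [hp, eval_zero, eq_comm, div_eq_zero_iff] at hj
  exact hj.resolve_right (nodalWeight_ne_zero hy.injOn (mem_univ j))

/-- The sequence `a, f 2, …, f d` of length `d`, indexed as in the matrix of `G`. -/
def withHead (d : ℕ) {α : Type*} (a : α) (f : ℕ → α) (i : Fin d) : α :=
  if (i : ℕ) = 0 then a else f (i + 1)

theorem Fin.val_add_one_mem_Icc_two {d : ℕ} {i : Fin d} (hi : (i : ℕ) ≠ 0) :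
    (i : ℕ) + 1 ∈ Set.Icc 2 d :=
  ⟨by omega, by omega⟩

theorem withHead_injective {d : ℕ} {α : Type*} {a : α} {f : ℕ → α}
    (hf : Set.InjOn f (Set.Icc 2 d)) (ha : ∀ l ∈ Set.Icc 2 d, f l ≠ a) :
    Function.Injective (withHead d a f) := by
  intro i j hij
  by_cases hi : (i : ℕ) = 0 <;> by_cases hj : (j : ℕ) = 0 <;>
    simp only [withHead, hi, hj, if_true, if_false] at hij
  · exact Fin.ext (hi.trans hj.symm)
  · exact absurd hij.symm (ha _ (Fin.val_add_one_mem_Icc_two hj))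
  · exact absurd hij (ha _ (Fin.val_add_one_mem_Icc_two hi))
  · exact Fin.ext <| by
      simpa using hf (Fin.val_add_one_mem_Icc_two hi) (Fin.val_add_one_mem_Icc_two hj) hij

theorem inv_mul_sub_one_eq {K : Type*} [Field K] {b : K} (c : K) (hb : b ≠ 0) :
    (c * b - 1)⁻¹ = -b⁻¹ * (b⁻¹ - c)⁻¹ := by
  rw [neg_mul, ← mul_inv, mul_sub, mul_inv_cancel₀ hb, ← inv_neg, neg_sub, mul_comm]

def gMatrix (d : ℕ) (z : ℕ → ℂ) : Matrix (Fin d) (Fin d) ℂ :=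
  Matrix.of fun i j : Fin d =>
    if (i : ℕ) = 0 then
      (if (j : ℕ) = 0 then 1 else 1 / starRingEnd ℂ (z ((j : ℕ) + 1)))
    else
      (if (j : ℕ) = 0 then 1 / (z ((i : ℕ) + 1) - 1)
       else 1 / (starRingEnd ℂ (z ((j : ℕ) + 1)) * z ((i : ℕ) + 1) - 1))

section

variable {d : ℕ} {z : ℕ → ℂ}

theorem det_gMatrix (hz : ∀ l ∈ Set.Icc 2 d, z l ≠ 0) :
    (gMatrix d z).det = (∏ i, withHead d (-1) (fun l => -(z l)⁻¹) i) *
      (Matrix.of fun i j => (withHead d 0 (fun l => (z l)⁻¹) i -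
        withHead d 1 (fun l => starRingEnd ℂ (z l)) j)⁻¹).det := by
  rw [← Matrix.det_mul_column]
  congr 1
  ext i j
  simp only [gMatrix, Matrix.of_apply, withHead, one_div]
  split_ifs with hi hj hj
  · simp
  · simp
  · simpa only [one_mul] using inv_mul_sub_one_eq 1 (hz _ (Fin.val_add_one_mem_Icc_two hi))
  · exact inv_mul_sub_one_eq _ (hz _ (Fin.val_add_one_mem_Icc_two hi))

theorem withHead_neg_inv_ne_zero (hz : ∀ l ∈ Set.Icc 2 d, z l ≠ 0) (i : Fin d) :
    withHead d (-1) (fun l => -(z l)⁻¹) i ≠ 0 := by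
  unfold withHead
  split_ifs with hi
  · norm_num
  · exact neg_ne_zero.mpr (inv_ne_zero (hz _ (Fin.val_add_one_mem_Icc_two hi)))

theorem norm_withHead_inv_lt_one (hout : ∀ l ∈ Set.Icc 2 d, 1 < ‖z l‖) (i : Fin d) :
    ‖withHead d 0 (fun l => (z l)⁻¹) i‖ < 1 := by
  unfold withHead
  split_ifs with hi
  · simp
  · rw [norm_inv]
    exact inv_lt_one_of_one_lt₀ (hout _ (Fin.val_add_one_mem_Icc_two hi))

theorem one_le_norm_withHead_conj (hout : ∀ l ∈ Set.Icc 2 d, 1 < ‖z l‖) (j : Fin d) :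
    1 ≤ ‖withHead d 1 (fun l => starRingEnd ℂ (z l)) j‖ := by
  unfold withHead
  split_ifs with hj
  · simp
  · rw [Complex.norm_conj]
    exact (hout _ (Fin.val_add_one_mem_Icc_two hj)).le

end

theorem G_nonzero_general (d : ℕ) (z : ℕ → ℂ)
    (hinj : Set.InjOn z (Set.Icc 2 d))
    (hout : ∀ l, 2 ≤ l → l ≤ d → 1 < ‖z l‖) :
    Matrix.det (Matrix.of fun i j : Fin d =>
      if (i : ℕ) = 0 then
        (if (j : ℕ) = 0 then 1 else 1 / starRingEnd ℂ (z ((j : ℕ) + 1)))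
      else
        (if (j : ℕ) = 0 then 1 / (z ((i : ℕ) + 1) - 1)
         else 1 / (starRingEnd ℂ (z ((j : ℕ) + 1)) * z ((i : ℕ) + 1) - 1))) ≠ 0 := by
  have hout' : ∀ l ∈ Set.Icc 2 d, 1 < ‖z l‖ := fun l hl => hout l hl.1 hl.2
  have hz : ∀ l ∈ Set.Icc 2 d, z l ≠ 0 := fun l hl =>
    norm_pos_iff.mp (one_pos.trans (hout' l hl))
  have hx : Function.Injective (withHead d 0 fun l => (z l)⁻¹) :=
    withHead_injective (fun k hk l hl h => hinj hk hl (inv_injective h)) fun l hl =>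
      inv_ne_zero (hz l hl)
  have hy : Function.Injective (withHead d 1 fun l => starRingEnd ℂ (z l)) :=
    withHead_injective (fun k hk l hl h => hinj hk hl ((starRingEnd ℂ).injective h))
      fun l hl h => (hout' l hl).ne' (by simpa using congrArg norm h)
  have hxy : ∀ i j, withHead d 0 (fun l => (z l)⁻¹) i ≠
      withHead d 1 (fun l => starRingEnd ℂ (z l)) j := fun i j h =>
    (norm_withHead_inv_lt_one hout' i).not_ge (h ▸ one_le_norm_withHead_conj hout' j)
  change (gMatrix d z).det ≠ 0
  rw [det_gMatrix hz]
  exact mul_ne_zero (prod_ne_zero_iff.mpr fun i _ => withHead_neg_inv_ne_zero hz i)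
    (Matrix.det_cauchy_ne_zero hx hy hxy)

/-- The determinant `G` is nonzero when the extra zeros are outside the closed disk. -/
theorem G_nonzero (d : ℕ) (hd : 2 ≤ d) (z : ℕ → ℂ)
    (hinj : Set.InjOn z (Set.Icc 2 d))
    (hout : ∀ l, 2 ≤ l → l ≤ d → 1 < ‖z l‖) :
    Matrix.det (Matrix.of fun i j : Fin d =>
      if (i : ℕ) = 0 then
        (if (j : ℕ) = 0 then 1 else 1 / starRingEnd ℂ (z ((j : ℕ) + 1)))
      else
        (if (j : ℕ) = 0 then 1 / (z ((i : ℕ) + 1) - 1)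
         else 1 / (starRingEnd ℂ (z ((j : ℕ) + 1)) * z ((i : ℕ) + 1) - 1))) ≠ 0 :=
  G_nonzero_general d z hinj hout

end
end

section
/- Let θ₁,…,θ_n ∈ [−π, π). Then there exists a strictly increasing sequence (n_k) of positive integers such that, for each j = 1,…,n, n_k·θ_j → 0 modulo 2π as k → ∞; equivalently, exp(i·n_k·θ_j) → 1 for every j. -/
open Polynomial Filter Topology MeasureTheory Metric Asymptotics

noncomputable section

/-!
In the compact group `Fin n → Circle`, the identity is a cluster point of the positive powers of
any element (`mapClusterPt_one_atTop_pow`). Applied to `(exp (i θ_j))_j`, a subsequence of powers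
converging to the identity gives the `n_k`.
-/

theorem exists_strictMono_pos_tendsto_pow_one {G : Type*} [Group G] [TopologicalSpace G]
    [CompactSpace G] [IsTopologicalGroup G] [FirstCountableTopology G] (x : G) :
    ∃ nk : ℕ → ℕ, StrictMono nk ∧ (∀ k, 0 < nk k) ∧ Tendsto (fun k ↦ x ^ nk k) atTop (𝓝 1) := by
  obtain ⟨ψ, hψ, hlim⟩ := (mapClusterPt_one_atTop_pow x).tendsto_subseq
  exact ⟨fun k ↦ ψ (k + 1), fun a b hab ↦ hψ (Nat.succ_lt_succ hab),
    fun k ↦ (Nat.zero_le _).trans_lt (hψ k.succ_pos), hlim.comp (tendsto_add_atTop_nat 1)⟩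

theorem simultaneous_angles_general (n : ℕ) (θ : Fin n → ℝ) :
    ∃ nk : ℕ → ℕ, StrictMono nk ∧ (∀ k, 0 < nk k) ∧
      ∀ j : Fin n,
        Filter.Tendsto (fun k => Complex.exp (Complex.I * (nk k : ℂ) * (θ j : ℂ)))
          Filter.atTop (nhds 1) := by
  set x : Fin n → Circle := fun j ↦ Circle.exp (θ j)
  have hx_pow (m : ℕ) (j : Fin n) :
      ((x ^ m) j : ℂ) = Complex.exp (Complex.I * (m : ℂ) * (θ j : ℂ)) := by
    rw [Pi.pow_apply, ← Circle.exp_natCast_mul, Circle.coe_exp]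
    push_cast
    ring_nf
  obtain ⟨nk, hmono, hpos, hlim⟩ := exists_strictMono_pos_tendsto_pow_one x
  refine ⟨nk, hmono, hpos, fun j ↦ ?_⟩
  have hj : Tendsto (fun k ↦ ((x ^ nk k) j : ℂ)) atTop (𝓝 ((1 : Circle) : ℂ)) :=
    (continuous_subtype_val.tendsto _).comp (tendsto_pi_nhds.1 hlim j)
  simpa only [hx_pow, Circle.coe_one] using hj

/-- Simultaneous approximation of multiples of angles to `0` modulo `2π`. -/
theorem simultaneous_angles (n : ℕ) (θ : Fin n → ℝ)
    (hθ : ∀ j, θ j ∈ Set.Ico (-Real.pi) Real.pi) :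
    ∃ nk : ℕ → ℕ, StrictMono nk ∧ (∀ k, 0 < nk k) ∧
      ∀ j : Fin n,
        Filter.Tendsto (fun k => Complex.exp (Complex.I * (nk k : ℂ) * (θ j : ℂ)))
          Filter.atTop (nhds 1) :=
  simultaneous_angles_general n θ

end
end

section
/- Let ω : ℕ → (0,∞) be a monotone (nondecreasing or nonincreasing) sequence satisfying ω_n / ω_{n−⌊√n⌋} → 1 as n → ∞. Then ω_k / ω_{k+1} → 1 as k → ∞. -/
open Polynomial Filter Topology MeasureTheory Metric Asymptotics

noncomputable section

/-
If ω is monotone or antitone, ω_k lies between ω_{k+1-d} and ω_{k+1} for any gap 1 ≤ d ≤ k + 1, so ω_k/ω_{k+1} lies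
between 1 and ω_{k+1-d}/ω_{k+1}. With d = ⌊√(k+1)⌋ the latter is the reciprocal of the hypothesised ratio
at k + 1, which tends to 1.
-/

lemma div_mem_uIcc_one_div {ω : ℕ → ℝ} (hmono : Monotone ω ∨ Antitone ω) {m k n : ℕ}
    (hn : 0 < ω n) (hmk : m ≤ k) (hkn : k ≤ n) : ω k / ω n ∈ Set.uIcc 1 (ω m / ω n) := by
  have hk : k ∈ Set.uIcc m n := Set.Icc_subset_uIcc ⟨hmk, hkn⟩
  rw [Set.uIcc_comm, ← div_self hn.ne']
  simp only [div_eq_mul_inv]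
  rcases hmono with hω | hω
  · exact (hω.mul_const (inv_nonneg.2 hn.le)).mapsTo_uIcc hk
  · exact (hω.mul_const (inv_nonneg.2 hn.le)).mapsTo_uIcc hk

theorem tendsto_div_succ_of_tendsto_div_sub {ω : ℕ → ℝ} {d : ℕ → ℕ} (hpos : ∀ k, 0 < ω k)
    (hmono : Monotone ω ∨ Antitone ω) (hd : ∀ᶠ n in atTop, 0 < d n)
    (hratio : Tendsto (fun n => ω n / ω (n - d n)) atTop (𝓝 1)) :
    Tendsto (fun k => ω k / ω (k + 1)) atTop (𝓝 1) := by
  have hinv : Tendsto (fun k => ω (k + 1 - d (k + 1)) / ω (k + 1)) atTop (𝓝 1) := by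
    simpa using (hratio.comp (tendsto_add_atTop_nat 1)).inv₀ one_ne_zero
  rw [tendsto_iff_norm_sub_tendsto_zero] at hinv ⊢
  refine squeeze_zero' (Eventually.of_forall fun _ => norm_nonneg _) ?_ hinv
  filter_upwards [(tendsto_add_atTop_nat 1).eventually hd] with k hk
  simp only [Real.norm_eq_abs]
  exact Set.abs_sub_left_of_mem_uIcc <|
    div_mem_uIcc_one_div hmono (hpos _) (by omega) k.le_succ

/-- The ratio condition implies `ω_k/ω_{k+1} → 1`. -/
theorem ratio_to_one (ω : ℕ → ℝ) (hpos : ∀ k, 0 < ω k)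
    (hmono : Monotone ω ∨ Antitone ω)
    (hratio : Filter.Tendsto (fun n => ω n / ω (n - Nat.sqrt n)) Filter.atTop (nhds 1)) :
    Filter.Tendsto (fun k => ω k / ω (k + 1)) Filter.atTop (nhds 1) :=
  tendsto_div_succ_of_tendsto_div_sub hpos hmono
    ((eventually_gt_atTop 0).mono fun _ => Nat.sqrt_pos.mpr) hratio

end
end
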